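/- (Classification of cycle closers for D-permutations.) Let σ be a D-permutation of [2n]. Define the DS order on [2n]: 2, 4, …, 2n (the evens in increasing order) followed by 2n−1, 2n−3, …, 3, 1 (the odds in decreasing order). For a non-fixed-point u ∈ [2n], let P(u) be the set of elements strictly preceding u in the DS order. Then the directed graph on [2n] with edge set {(v, σ(v)) : v ∈ P(u)} contains a directed path from σ(u) to u (equivalently, inserting the edge u → σ(u) closes a directed cycle) if and only if u is the smallest element of its cycle under σ; in that case u is a cycle valley that is the minimum of its cycle. -/
import Mathlib


open scoped Classical
open Finset

noncomputable section

namespace CFPaper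

/-! ### Lattice-path machinery -/

inductive MStep | up | down | level
deriving DecidableEq

/-- all lists of Motzkin steps of length `n`. -/
def mlists : ℕ → Finset (List MStep)
  | 0 => {[]}
  | n + 1 =>
      (mlists n).image (MStep.up :: ·) ∪ (mlists n).image (MStep.down :: ·) ∪
        (mlists n).image (MStep.level :: ·)

/-- `MValid h p` : starting from height `h`, the path `p` stays at heights `≥ 0`
(automatic, heights being natural numbers) and ends at height `0`. -/
inductive MValid : ℕ → List MStep → Prop
  | nil : MValid 0 []
  | up {h : ℕ} {p : List MStep} : MValid (h + 1) p → MValid h (MStep.up :: p)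
  | down {h : ℕ} {p : List MStep} : MValid h p → MValid (h + 1) (MStep.down :: p)
  | level {h : ℕ} {p : List MStep} : MValid h p → MValid h (MStep.level :: p)

inductive DStep | up | down
deriving DecidableEq

/-- all lists of Dyck steps of length `n`. -/
def dlists : ℕ → Finset (List DStep)
  | 0 => {[]}
  | n + 1 => (dlists n).image (DStep.up :: ·) ∪ (dlists n).image (DStep.down :: ·)

inductive DValid : ℕ → List DStep → Prop
  | nil : DValid 0 []
  | up {h : ℕ} {p : List DStep} : DValid (h + 1) p → DValid h (DStep.up :: p)
  | down {h : ℕ} {p : List DStep} : DValid h p → DValid (h + 1) (DStep.down :: p)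

inductive SStep | up | down | lvl
deriving DecidableEq

/-- all lists of Schröder steps of total width `m` (a long level step `lvl` has width 2). -/
def slists : ℕ → Finset (List SStep)
  | 0 => {[]}
  | 1 => (slists 0).image (SStep.up :: ·) ∪ (slists 0).image (SStep.down :: ·)
  | m + 2 =>
      (slists (m + 1)).image (SStep.up :: ·) ∪ (slists (m + 1)).image (SStep.down :: ·) ∪
        (slists m).image (SStep.lvl :: ·)

inductive SValid : ℕ → List SStep → Prop
  | nil : SValid 0 []
  | up {h : ℕ} {p : List SStep} : SValid (h + 1) p → SValid h (SStep.up :: p)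
  | down {h : ℕ} {p : List SStep} : SValid h p → SValid (h + 1) (SStep.down :: p)
  | lvl {h : ℕ} {p : List SStep} : SValid h p → SValid h (SStep.lvl :: p)

variable {R : Type*} [CommRing R]

/-- weight of a Motzkin path, read off from the current height: each rise has weight 1,
each fall starting at height `h` has weight `β h`, each level step at height `h` has
weight `γ h`. -/
def mweight (β γ : ℕ → R) : ℕ → List MStep → R
  | _, [] => 1
  | h, MStep.up :: p => mweight β γ (h + 1) p
  | h, MStep.down :: p => β h * mweight β γ (h - 1) p
  | h, MStep.level :: p => γ h * mweight β γ h p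

/-- sum over all Motzkin paths of length `n` of the product of the step weights. -/
def motzkinSum (β γ : ℕ → R) (n : ℕ) : R :=
  ∑ p ∈ (mlists n).filter (MValid 0), mweight β γ 0 p

def dweight (α : ℕ → R) : ℕ → List DStep → R
  | _, [] => 1
  | h, DStep.up :: p => dweight α (h + 1) p
  | h, DStep.down :: p => α h * dweight α (h - 1) p

/-- sum over all Dyck paths of length `2*n` of the product over falls of `α h`,
`h` being the starting height of the fall (rises have weight 1). -/
def dyckSum (α : ℕ → R) (n : ℕ) : R :=
  ∑ p ∈ (dlists (2 * n)).filter (DValid 0), dweight α 0 p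

def sweight (α δ : ℕ → R) : ℕ → List SStep → R
  | _, [] => 1
  | h, SStep.up :: p => sweight α δ (h + 1) p
  | h, SStep.down :: p => α h * sweight α δ (h - 1) p
  | h, SStep.lvl :: p => δ h * sweight α δ h p

/-- sum over all Schröder paths of length `2*n` of the product of step weights:
rises have weight 1, a fall starting at height `h` has weight `α h`, a long level step
at height `h` has weight `δ h`. -/
def schroederSum (α δ : ℕ → R) (n : ℕ) : R :=
  ∑ p ∈ (slists (2 * n)).filter (SValid 0), sweight α δ 0 p

/-- `(p,q)`-integer `[m]_{p,q} = Σ_{i=0}^{m-1} p^i q^(m-1-i)`. -/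
def pqInt (p q : R) (m : ℕ) : R := ∑ i ∈ Finset.range m, p ^ i * q ^ (m - 1 - i)

/-! ### Permutation statistics -/

variable {n : ℕ}

/-- number of indices satisfying `P`. -/
def cnt (P : Fin n → Prop) : ℕ := (Finset.univ.filter P).card

def IsCpeak (σ : Equiv.Perm (Fin n)) (i : Fin n) : Prop := σ.symm i < i ∧ σ i < i
def IsCval (σ : Equiv.Perm (Fin n)) (i : Fin n) : Prop := i < σ.symm i ∧ i < σ i
def IsCdrise (σ : Equiv.Perm (Fin n)) (i : Fin n) : Prop := σ.symm i < i ∧ i < σ i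
def IsCdfall (σ : Equiv.Perm (Fin n)) (i : Fin n) : Prop := i < σ.symm i ∧ σ i < i
def IsFixPt (σ : Equiv.Perm (Fin n)) (i : Fin n) : Prop := σ i = i

def IsRec (σ : Equiv.Perm (Fin n)) (i : Fin n) : Prop := ∀ j, j < i → σ j < σ i
def IsArec (σ : Equiv.Perm (Fin n)) (i : Fin n) : Prop := ∀ j, i < j → σ i < σ j
def IsErec (σ : Equiv.Perm (Fin n)) (i : Fin n) : Prop := IsRec σ i ∧ ¬ IsArec σ i
def IsEarec (σ : Equiv.Perm (Fin n)) (i : Fin n) : Prop := IsArec σ i ∧ ¬ IsRec σ i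
def IsRar (σ : Equiv.Perm (Fin n)) (i : Fin n) : Prop := IsRec σ i ∧ IsArec σ i
def IsNrar (σ : Equiv.Perm (Fin n)) (i : Fin n) : Prop := ¬ IsRec σ i ∧ ¬ IsArec σ i

/-- `i` is a record value iff `σ⁻¹ i` is a record. -/
def IsRecV (σ : Equiv.Perm (Fin n)) (i : Fin n) : Prop := IsRec σ (σ.symm i)
def IsArecV (σ : Equiv.Perm (Fin n)) (i : Fin n) : Prop := IsArec σ (σ.symm i)
def IsErecV (σ : Equiv.Perm (Fin n)) (i : Fin n) : Prop := IsRecV σ i ∧ ¬ IsArecV σ i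
def IsEarecV (σ : Equiv.Perm (Fin n)) (i : Fin n) : Prop := IsArecV σ i ∧ ¬ IsRecV σ i
def IsNrarV (σ : Equiv.Perm (Fin n)) (i : Fin n) : Prop := ¬ IsRecV σ i ∧ ¬ IsArecV σ i

/-- the index `i : Fin n` represents the one-based index `i+1`; it is "even" if `i+1` is even. -/
def IsEvenIdx (i : Fin n) : Prop := Even ((i : ℕ) + 1)
def IsOddIdx (i : Fin n) : Prop := Odd ((i : ℕ) + 1)

/-- `i` is the smallest element of its cycle. -/
def IsCycMin (σ : Equiv.Perm (Fin n)) (i : Fin n) : Prop := ∀ j, σ.SameCycle i j → i ≤ j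

/-- number of cycles (counting fixed points as cycles), i.e. number of cycle minima. -/
def cyc (σ : Equiv.Perm (Fin n)) : ℕ := cnt (IsCycMin σ)

def eareccpeak (σ : Equiv.Perm (Fin n)) : ℕ := cnt fun i => IsEarec σ i ∧ IsCpeak σ i
def eareccdfall (σ : Equiv.Perm (Fin n)) : ℕ := cnt fun i => IsEarec σ i ∧ IsCdfall σ i
def ereccval (σ : Equiv.Perm (Fin n)) : ℕ := cnt fun i => IsErec σ i ∧ IsCval σ i
def ereccdrise (σ : Equiv.Perm (Fin n)) : ℕ := cnt fun i => IsErec σ i ∧ IsCdrise σ i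
def nrcpeak (σ : Equiv.Perm (Fin n)) : ℕ := cnt fun i => IsNrar σ i ∧ IsCpeak σ i
def nrcdfall (σ : Equiv.Perm (Fin n)) : ℕ := cnt fun i => IsNrar σ i ∧ IsCdfall σ i
def nrcval (σ : Equiv.Perm (Fin n)) : ℕ := cnt fun i => IsNrar σ i ∧ IsCval σ i
def nrcdrise (σ : Equiv.Perm (Fin n)) : ℕ := cnt fun i => IsNrar σ i ∧ IsCdrise σ i
def cval (σ : Equiv.Perm (Fin n)) : ℕ := cnt (IsCval σ)

def ereccpeak' (σ : Equiv.Perm (Fin n)) : ℕ := cnt fun i => IsErecV σ i ∧ IsCpeak σ i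
def eareccdfall' (σ : Equiv.Perm (Fin n)) : ℕ := cnt fun i => IsEarecV σ i ∧ IsCdfall σ i
def eareccval' (σ : Equiv.Perm (Fin n)) : ℕ := cnt fun i => IsEarecV σ i ∧ IsCval σ i
def ereccdrise' (σ : Equiv.Perm (Fin n)) : ℕ := cnt fun i => IsErecV σ i ∧ IsCdrise σ i
def nrcpeak' (σ : Equiv.Perm (Fin n)) : ℕ := cnt fun i => IsNrarV σ i ∧ IsCpeak σ i
def nrcdfall' (σ : Equiv.Perm (Fin n)) : ℕ := cnt fun i => IsNrarV σ i ∧ IsCdfall σ i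
def nrcval' (σ : Equiv.Perm (Fin n)) : ℕ := cnt fun i => IsNrarV σ i ∧ IsCval σ i
def nrcdrise' (σ : Equiv.Perm (Fin n)) : ℕ := cnt fun i => IsNrarV σ i ∧ IsCdrise σ i

def evennrfix (σ : Equiv.Perm (Fin n)) : ℕ :=
  cnt fun i => IsFixPt σ i ∧ IsEvenIdx i ∧ ¬ IsRar σ i
def oddnrfix (σ : Equiv.Perm (Fin n)) : ℕ :=
  cnt fun i => IsFixPt σ i ∧ IsOddIdx i ∧ ¬ IsRar σ i
def evenrar (σ : Equiv.Perm (Fin n)) : ℕ :=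
  cnt fun i => IsFixPt σ i ∧ IsEvenIdx i ∧ IsRar σ i
def oddrar (σ : Equiv.Perm (Fin n)) : ℕ :=
  cnt fun i => IsFixPt σ i ∧ IsOddIdx i ∧ IsRar σ i

/-- number of cycle valleys that are the minimum of their cycle. -/
def minval (σ : Equiv.Perm (Fin n)) : ℕ := cnt fun i => IsCval σ i ∧ IsCycMin σ i
/-- number of cycle valleys that are not the minimum of their cycle. -/
def nminval (σ : Equiv.Perm (Fin n)) : ℕ := cnt fun i => IsCval σ i ∧ ¬ IsCycMin σ i

/-- pseudo-nesting number of the index `i`. -/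
def psnest (σ : Equiv.Perm (Fin n)) (i : Fin n) : ℕ := cnt fun j => j < i ∧ i < σ j

def fixSet (σ : Equiv.Perm (Fin n)) : Finset (Fin n) := Finset.univ.filter (IsFixPt σ)

def psnestTot (σ : Equiv.Perm (Fin n)) : ℕ := ∑ i ∈ fixSet σ, psnest σ i
def epsnest (σ : Equiv.Perm (Fin n)) : ℕ :=
  ∑ i ∈ Finset.univ.filter (fun i => IsFixPt σ i ∧ IsEvenIdx i), psnest σ i
def opsnest (σ : Equiv.Perm (Fin n)) : ℕ :=
  ∑ i ∈ Finset.univ.filter (fun i => IsFixPt σ i ∧ IsOddIdx i), psnest σ i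

def ucross (σ : Equiv.Perm (Fin n)) (j : Fin n) : ℕ :=
  cnt fun i => i < j ∧ j < σ i ∧ σ i < σ j
def unest (σ : Equiv.Perm (Fin n)) (j : Fin n) : ℕ :=
  cnt fun i => i < j ∧ j < σ j ∧ σ j < σ i
def lcross (σ : Equiv.Perm (Fin n)) (k : Fin n) : ℕ :=
  cnt fun l => k < l ∧ σ k < σ l ∧ σ l < k
def lnest (σ : Equiv.Perm (Fin n)) (k : Fin n) : ℕ :=
  cnt fun l => k < l ∧ σ l < σ k ∧ σ k < k

def ucross' (σ : Equiv.Perm (Fin n)) (k : Fin n) : ℕ :=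
  cnt fun j => σ.symm k < j ∧ j < k ∧ k < σ j
def unest' (σ : Equiv.Perm (Fin n)) (k : Fin n) : ℕ :=
  cnt fun i => i < σ.symm k ∧ σ.symm k < k ∧ k < σ i
def lcross' (σ : Equiv.Perm (Fin n)) (j : Fin n) : ℕ :=
  cnt fun k => σ k < j ∧ j < k ∧ k < σ.symm j
def lnest' (σ : Equiv.Perm (Fin n)) (j : Fin n) : ℕ :=
  cnt fun l => σ l < j ∧ j < σ.symm j ∧ σ.symm j < l

def ucrosscval (σ : Equiv.Perm (Fin n)) : ℕ := ∑ i ∈ Finset.univ.filter (IsCval σ), ucross σ i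
def unestcval (σ : Equiv.Perm (Fin n)) : ℕ := ∑ i ∈ Finset.univ.filter (IsCval σ), unest σ i
def ucrosscdrise (σ : Equiv.Perm (Fin n)) : ℕ := ∑ i ∈ Finset.univ.filter (IsCdrise σ), ucross σ i
def unestcdrise (σ : Equiv.Perm (Fin n)) : ℕ := ∑ i ∈ Finset.univ.filter (IsCdrise σ), unest σ i
def lcrosscpeak (σ : Equiv.Perm (Fin n)) : ℕ := ∑ i ∈ Finset.univ.filter (IsCpeak σ), lcross σ i
def lnestcpeak (σ : Equiv.Perm (Fin n)) : ℕ := ∑ i ∈ Finset.univ.filter (IsCpeak σ), lnest σ i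
def lcrosscdfall (σ : Equiv.Perm (Fin n)) : ℕ := ∑ i ∈ Finset.univ.filter (IsCdfall σ), lcross σ i
def lnestcdfall (σ : Equiv.Perm (Fin n)) : ℕ := ∑ i ∈ Finset.univ.filter (IsCdfall σ), lnest σ i

def ucrosscpeak' (σ : Equiv.Perm (Fin n)) : ℕ := ∑ i ∈ Finset.univ.filter (IsCpeak σ), ucross' σ i
def unestcpeak' (σ : Equiv.Perm (Fin n)) : ℕ := ∑ i ∈ Finset.univ.filter (IsCpeak σ), unest' σ i
def lcrosscval' (σ : Equiv.Perm (Fin n)) : ℕ := ∑ i ∈ Finset.univ.filter (IsCval σ), lcross' σ i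
def lnestcval' (σ : Equiv.Perm (Fin n)) : ℕ := ∑ i ∈ Finset.univ.filter (IsCval σ), lnest' σ i
def lcrosscdfall' (σ : Equiv.Perm (Fin n)) : ℕ := ∑ i ∈ Finset.univ.filter (IsCdfall σ), lcross' σ i
def lnestcdfall' (σ : Equiv.Perm (Fin n)) : ℕ := ∑ i ∈ Finset.univ.filter (IsCdfall σ), lnest' σ i
def ucrosscdrise' (σ : Equiv.Perm (Fin n)) : ℕ := ∑ i ∈ Finset.univ.filter (IsCdrise σ), ucross' σ i
def unestcdrise' (σ : Equiv.Perm (Fin n)) : ℕ := ∑ i ∈ Finset.univ.filter (IsCdrise σ), unest' σ i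

/-- D-permutation: `2k-1 ≤ σ(2k-1)` and `2k ≥ σ(2k)` in one-based indexing. -/
def IsDPerm (σ : Equiv.Perm (Fin n)) : Prop :=
  ∀ i : Fin n, (IsOddIdx i → i ≤ σ i) ∧ (IsEvenIdx i → σ i ≤ i)

/-- D-o-semiderangement: a D-permutation with no odd fixed points. -/
def IsDoSemi (σ : Equiv.Perm (Fin n)) : Prop :=
  IsDPerm σ ∧ ∀ i, IsFixPt σ i → IsEvenIdx i

def lema (σ : Equiv.Perm (Fin n)) : ℕ := cnt fun i => IsRec σ i ∧ IsEvenIdx (σ i)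
def romi (σ : Equiv.Perm (Fin n)) : ℕ := cnt fun i => IsArec σ i ∧ IsOddIdx (σ i)
def remi (σ : Equiv.Perm (Fin n)) : ℕ := cnt fun i => IsArec σ i ∧ IsEvenIdx (σ i)
def fixCnt (σ : Equiv.Perm (Fin n)) : ℕ := cnt (IsFixPt σ)
def comi (σ : Equiv.Perm (Fin n)) : ℕ := cnt fun i => IsOddIdx i ∧ IsCycMin σ i
def cemi (σ : Equiv.Perm (Fin n)) : ℕ := cnt fun i => IsEvenIdx i ∧ IsCycMin σ i

/-- the edge relation of the directed graph on `Fin n` with an edge `u → σ u`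
for every `u ∈ S`. -/
def edgeOf (σ : Equiv.Perm (Fin n)) (S : Set (Fin n)) (u v : Fin n) : Prop :=
  u ∈ S ∧ v = σ u

section Aux

variable {m : ℕ}

private lemma pow_succ_apply (σ : Equiv.Perm (Fin m)) (k : ℕ) (u : Fin m) :
    (σ ^ (k + 1)) u = σ ((σ ^ k) u) := by
  rw [pow_succ', Equiv.Perm.mul_apply]

/-- a chain `σ u → σ² u → ⋯ → σ^k u` where all sources are `≠ u`. -/
private lemma chain_aux (σ : Equiv.Perm (Fin m)) (u : Fin m) :
    ∀ k : ℕ, 1 ≤ k → (∀ l, 0 < l → l < k → (σ ^ l) u ≠ u) →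
      Relation.ReflTransGen (fun x y => y = σ x ∧ x ≠ u) (σ u) ((σ ^ k) u) := by
  intro k
  induction k with
  | zero => intro h; omega
  | succ k ih =>
    intro _ hl
    rcases Nat.eq_zero_or_pos k with h1 | h1
    · subst h1; rw [pow_one]
    · have hk1 : 1 ≤ k := h1
      have hprev := ih hk1 (fun l h0 hlk => hl l h0 (by omega))
      exact hprev.tail ⟨(pow_succ_apply σ k u).symm ▸ rfl, hl k (by omega) (by omega)⟩

/-- classification of points reachable from `σ u` without passing through `u`,
given a path from `σ u` to `u` in the restricted digraph. -/
private lemma reach_aux (σ : Equiv.Perm (Fin m)) (u : Fin m) (S : Set (Fin m)) (a : Fin m)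
    (h : Relation.ReflTransGen (edgeOf σ S) a u) :
    ∀ j, Relation.ReflTransGen (fun x y => y = σ x ∧ x ≠ u) a j → j = u ∨ j ∈ S := by
  induction h using Relation.ReflTransGen.head_induction_on with
  | refl =>
    intro j hj
    rcases hj.cases_head with h | ⟨c, ⟨_, hne⟩, _⟩
    · exact Or.inl h.symm
    · exact absurd rfl hne
  | @head a c hac hcb ih =>
    obtain ⟨haS, hceq⟩ := hac
    intro j hj
    rcases hj.cases_head with h | ⟨c', ⟨hc'eq, _⟩, hrest⟩
    · exact Or.inr (h ▸ haS)
    · exact ih j (by rwa [hceq, ← hc'eq])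

end Aux

/-- classification of cycle closers for D-permutations: for a
non-fixed-point `u` of a D-permutation `σ`, the digraph whose edges come from the
predecessors of `u` in the DS order (even positions in increasing order, then odd
positions in decreasing order) contains a directed path from `σ u` to `u` iff `u` is
the minimum of its cycle; in that case `u` is a cycle valley. -/
theorem statement17 (n : ℕ) (σ : Equiv.Perm (Fin (2 * n))) (hσ : IsDPerm σ)
    (u : Fin (2 * n)) (hu : σ u ≠ u) :
    (Relation.ReflTransGen
        (edgeOf σ
          (if IsEvenIdx u then {v | IsEvenIdx v ∧ v < u}
            else {v | IsEvenIdx v ∨ (IsOddIdx v ∧ u < v)}))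
        (σ u) u ↔ IsCycMin σ u) ∧
    (IsCycMin σ u → IsCval σ u) := by
  have hsc1 : σ.SameCycle u (σ u) := ⟨1, by simp⟩
  by_cases hpar : IsEvenIdx u
  · -- `u` has even one-based index: both sides are false.
    rw [if_pos hpar]
    have hle : σ u ≤ u := (hσ u).2 hpar
    have hnc : ¬ IsCycMin σ u := fun hm => hu (le_antisymm hle (hm (σ u) hsc1))
    have hnp : ¬ Relation.ReflTransGen
        (edgeOf σ {v | IsEvenIdx v ∧ v < u}) (σ u) u := by
      intro h
      rcases h.cases_tail with heq | ⟨c, _, ⟨hcS, hueq⟩⟩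
      · exact hu heq.symm
      · have : σ c ≤ c := (hσ c).2 hcS.1
        rw [← hueq] at this
        exact absurd (lt_of_le_of_lt this hcS.2) (lt_irrefl u)
    exact ⟨⟨fun h => absurd h hnp, fun h => absurd h hnc⟩, fun h => absurd h hnc⟩
  · -- `u` has odd one-based index.
    rw [if_neg hpar]
    have hodd : IsOddIdx u := Nat.not_even_iff_odd.mp hpar
    have hlt : u < σ u := lt_of_le_of_ne ((hσ u).1 hodd) (fun h => hu h.symm)
    set S : Set (Fin (2 * n)) := {v | IsEvenIdx v ∨ (IsOddIdx v ∧ u < v)} with hS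
    constructor
    · constructor
      · -- path ⇒ cycle minimum
        intro h j hj
        by_contra hjlt
        push_neg at hjlt
        -- take the minimum `t` of the cycle of `u`
        have hne : (Finset.univ.filter (fun x => σ.SameCycle u x)).Nonempty :=
          ⟨u, by simp [Equiv.Perm.SameCycle.refl]⟩
        set T := Finset.univ.filter (fun x => σ.SameCycle u x) with hT
        set t := T.min' hne with ht
        have htT : t ∈ T := T.min'_mem hne
        have htsc : σ.SameCycle u t := (Finset.mem_filter.mp htT).2
        have htmin : ∀ x, σ.SameCycle u x → t ≤ x := fun x hx =>
          T.min'_le x (Finset.mem_filter.mpr ⟨Finset.mem_univ x, hx⟩)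
        have htu : t < u := lt_of_le_of_lt (htmin j hj) hjlt
        have htne : t ≠ u := ne_of_lt htu
        by_cases htpar : IsEvenIdx t
        · -- even cycle minimum: `σ t < t`, contradiction
          have hfix : σ t ≠ t := by
            intro hfix
            obtain ⟨i, hi⟩ := htsc.symm
            rw [Equiv.Perm.zpow_apply_eq_self_of_apply_eq_self hfix i] at hi
            exact htne hi
          have h1 : σ t < t := lt_of_le_of_ne ((hσ t).2 htpar) hfix
          have h2 : t ≤ σ t := htmin (σ t) (htsc.trans ⟨1, by simp⟩)
          exact absurd h1 (not_lt.mpr h2)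
        · -- odd cycle minimum `< u`: it is reachable from `σ u` avoiding `u`,
          -- hence belongs to `S`, contradiction.
          have htodd : IsOddIdx t := Nat.not_even_iff_odd.mp htpar
          obtain ⟨i, _, hi⟩ := htsc.exists_pow_eq'
          have hex : ∃ k, (σ ^ k) u = t := ⟨i, hi⟩
          set k := Nat.find hex with hk
          have hkspec : (σ ^ k) u = t := Nat.find_spec hex
          have hk1 : 1 ≤ k := by
            rcases Nat.eq_zero_or_pos k with h0 | h0
            · exfalso; apply htne; rw [← hkspec, h0, pow_zero]; rfl
            · exact h0
          have hsrc : ∀ l, 0 < l → l < k → (σ ^ l) u ≠ u := by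
            intro l h0 hlk heq
            have hklt : (σ ^ (k - l)) u = t := by
              conv_lhs => rw [← heq]
              rw [← Equiv.Perm.mul_apply, ← pow_add, Nat.sub_add_cancel (le_of_lt hlk)]
              exact hkspec
            have hle : Nat.find hex ≤ k - l := Nat.find_le hklt
            rw [← hk] at hle
            omega
          have hchain := chain_aux σ u k hk1 hsrc
          rw [hkspec] at hchain
          rcases reach_aux σ u S (σ u) h t hchain with h1 | h1
          · exact htne h1
          · rcases h1 with h1 | ⟨_, h1⟩
            · exact htpar h1
            · exact absurd (lt_trans h1 htu) (lt_irrefl u)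
      · -- cycle minimum ⇒ path
        intro hmin
        have key : ∀ k : ℕ, Relation.ReflTransGen (edgeOf σ S) (σ u) ((σ ^ (k + 1)) u) := by
          intro k
          induction k with
          | zero => rw [pow_one]
          | succ k ih =>
            by_cases hw : (σ ^ (k + 1)) u = u
            · rw [pow_succ_apply, hw]
            · have hsc : σ.SameCycle u ((σ ^ (k + 1)) u) :=
                ⟨((k + 1 : ℕ) : ℤ), by rw [zpow_natCast]⟩
              have hwgt : u < (σ ^ (k + 1)) u :=
                lt_of_le_of_ne (hmin _ hsc) (Ne.symm hw)
              have hwS : (σ ^ (k + 1)) u ∈ S := by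
                by_cases hwpar : IsEvenIdx ((σ ^ (k + 1)) u)
                · exact Or.inl hwpar
                · exact Or.inr ⟨Nat.not_even_iff_odd.mp hwpar, hwgt⟩
              exact ih.tail ⟨hwS, pow_succ_apply σ (k + 1) u⟩
        have hN : 1 ≤ orderOf σ := orderOf_pos σ
        have := key (orderOf σ - 1)
        rwa [Nat.sub_add_cancel hN, pow_orderOf_eq_one, Equiv.Perm.one_apply] at this
    · -- cycle minimum ⇒ cycle valley
      intro hmin
      refine ⟨?_, hlt⟩
      have hsc : σ.SameCycle u (σ.symm u) := ⟨-1, by rw [zpow_neg, zpow_one]; rfl⟩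
      have hne : σ.symm u ≠ u := by
        intro h
        have := congrArg σ h
        rw [Equiv.apply_symm_apply] at this
        exact hu this.symm
      exact lt_of_le_of_ne (hmin _ hsc) (Ne.symm hne)

end CFPaper

end
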